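/- arXiv:1508.07203 — 5 statements merged into one kernel-verified Lean document; each statement's English description precedes it below -/
import Mathlib

section
/- Let Ξ be the automorphism of sl(n+2,C) induced by the Dynkin diagram automorphism α_i ↦ α_{n+2−i} on simple roots (extended by Ξ(H_{α_i}) = H_{Ξ(α_i)}, Ξ(E_{α_i}) = E_{Ξ(α_i)}, Ξ(F_{α_i}) = F_{Ξ(α_i)}). Then the composite embedding Ξ∘Θ of sl(n+1) ⋉ C^{n+1} into sl(n+2) is equivalent (conjugate by an inner automorphism) to the embedding Φ. -/
namespace Paper

attribute [local instance 100] LieRing.ofAssociativeRing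

/-- A concrete model of the perfect Lie algebra `sl(n+1) ⋉ ℂ^{n+1}`: the Lie subalgebra
of `gl(n+2, ℂ)` of trace-zero matrices whose first row vanishes.  Its generators are
`H_i = A_{i+1,i+1} - A_{i+2,i+2}`, `E_{p,q} = A_{p+1,q+2}`, `F_{p,q} = A_{q+2,p+1}`
(`1 ≤ i ≤ n`, `1 ≤ p ≤ q ≤ n`) and `P_j = A_{j+1,1}` (`1 ≤ j ≤ n+1`). -/
def gCar (n : ℕ) : LieSubalgebra ℂ (Matrix (Fin (n + 2)) (Fin (n + 2)) ℂ) where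
  carrier := {X | (∀ j, X 0 j = 0) ∧ Matrix.trace X = 0}
  add_mem' := by
    rintro X Y ⟨hX, hX'⟩ ⟨hY, hY'⟩
    refine ⟨fun j => ?_, ?_⟩
    · simp [Matrix.add_apply, hX j, hY j]
    · simp [Matrix.trace_add, hX', hY']
  zero_mem' := by
    refine ⟨fun j => rfl, by simp⟩
  smul_mem' := by
    rintro c X ⟨hX, hX'⟩
    refine ⟨fun j => ?_, ?_⟩
    · simp [Matrix.smul_apply, hX j]
    · simp [Matrix.trace_smul, hX']
  lie_mem' := by
    rintro X Y ⟨hX, hX'⟩ ⟨hY, hY'⟩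
    refine ⟨fun j => ?_, LieAlgebra.matrix_trace_commutator_zero _ _ _ _⟩
    have h : (⁅X, Y⁆ : Matrix (Fin (n + 2)) (Fin (n + 2)) ℂ) = X * Y - Y * X := rfl
    rw [h]
    simp [Matrix.sub_apply, Matrix.mul_apply, hX, hY]

/-- Two Lie algebra homomorphisms `gCar n → sl(n+2, ℂ)` are equivalent up to an inner
automorphism of `sl(n+2, ℂ)` (conjugation). -/
def conjEquiv (n : ℕ)
    (f g : gCar n →ₗ⁅ℂ⁆ LieAlgebra.SpecialLinear.sl (Fin (n + 2)) ℂ) : Prop :=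
  ∃ u : (Matrix (Fin (n + 2)) (Fin (n + 2)) ℂ)ˣ,
    ∀ x, ((g x : Matrix (Fin (n + 2)) (Fin (n + 2)) ℂ)) =
      (u : Matrix (Fin (n + 2)) (Fin (n + 2)) ℂ) *
        (f x : Matrix (Fin (n + 2)) (Fin (n + 2)) ℂ) *
          ((u⁻¹ : _ˣ) : Matrix (Fin (n + 2)) (Fin (n + 2)) ℂ)

/-- `f = Φ`: the embedding sending `H_i, E_{p,q}, F_{p,q}, P_j` to
`H_{i+1}, E_{p+1,q+1}, F_{p+1,q+1}, F_{1,j}` respectively, i.e. the inclusion of the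
concrete model `gCar n` into `sl(n+2, ℂ)`. -/
def IsPhi (n : ℕ) (f : gCar n →ₗ⁅ℂ⁆ LieAlgebra.SpecialLinear.sl (Fin (n + 2)) ℂ) : Prop :=
  ∀ x : gCar n, ((f x : Matrix (Fin (n + 2)) (Fin (n + 2)) ℂ)) =
    (x : Matrix (Fin (n + 2)) (Fin (n + 2)) ℂ)

/-- `f = Θ`: the embedding sending `H_i ↦ -H_{i+1}`, `E_{p,q} ↦ -F_{p+1,q+1}`,
`F_{p,q} ↦ -E_{p+1,q+1}` and `P_j ↦ E_{1,j}`; entrywise, on the concrete model,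
`Θ(X)_{1j} = X_{j1}`, `Θ(X)_{i1} = 0` and `Θ(X)_{ij} = -X_{ji}` for `i, j ≥ 2`. -/
def IsTheta (n : ℕ) (f : gCar n →ₗ⁅ℂ⁆ LieAlgebra.SpecialLinear.sl (Fin (n + 2)) ℂ) : Prop :=
  ∀ x : gCar n, ∀ i j : Fin (n + 2),
    ((f x : Matrix (Fin (n + 2)) (Fin (n + 2)) ℂ)) i j =
      if i = 0 then (x : Matrix (Fin (n + 2)) (Fin (n + 2)) ℂ) j 0
      else if j = 0 then 0
      else -((x : Matrix (Fin (n + 2)) (Fin (n + 2)) ℂ)) j i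

/-- `Ξ` acts on the Chevalley generators of `sl(n+2, ℂ)` by the order-reversing Dynkin
diagram automorphism `α_i ↦ α_{n+2-i}`. -/
def ChevCond (n : ℕ)
    (Ξ : LieAlgebra.SpecialLinear.sl (Fin (n + 2)) ℂ →ₗ⁅ℂ⁆
      LieAlgebra.SpecialLinear.sl (Fin (n + 2)) ℂ) : Prop :=
  ∀ i : Fin (n + 1),
    (∀ x : LieAlgebra.SpecialLinear.sl (Fin (n + 2)) ℂ,
      (x : Matrix (Fin (n + 2)) (Fin (n + 2)) ℂ) =
          Matrix.single i.castSucc i.succ 1 →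
      (Ξ x : Matrix (Fin (n + 2)) (Fin (n + 2)) ℂ) =
        Matrix.single i.rev.castSucc i.rev.succ 1) ∧
    (∀ x : LieAlgebra.SpecialLinear.sl (Fin (n + 2)) ℂ,
      (x : Matrix (Fin (n + 2)) (Fin (n + 2)) ℂ) =
          Matrix.single i.succ i.castSucc 1 →
      (Ξ x : Matrix (Fin (n + 2)) (Fin (n + 2)) ℂ) =
        Matrix.single i.rev.succ i.rev.castSucc 1) ∧
    (∀ x : LieAlgebra.SpecialLinear.sl (Fin (n + 2)) ℂ,
      (x : Matrix (Fin (n + 2)) (Fin (n + 2)) ℂ) =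
          Matrix.single i.castSucc i.castSucc 1
            - Matrix.single i.succ i.succ 1 →
      (Ξ x : Matrix (Fin (n + 2)) (Fin (n + 2)) ℂ) =
        Matrix.single i.rev.castSucc i.rev.castSucc 1
          - Matrix.single i.rev.succ i.rev.succ 1)

end Paper

/-!
Both `Θ` and `Ξ` have the form `X ↦ -(P Xᵀ Pᵀ)` for an orthogonal matrix `P`: for `Θ` it
is `S = diag(-1, 1, …, 1)`, for `Ξ` the antidiagonal matrix `J` with alternating signs. The
composite of two such maps is conjugation by the product of the two matrices, because the two
transposes and the two minus signs cancel; hence `Ξ ∘ Θ = Ad(J S) ∘ Φ`.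
-/

namespace Matrix

attribute [local instance 100] LieRing.ofAssociativeRing

variable {n R : Type*} [Fintype n] [DecidableEq n] [CommRing R]

lemma mul_mul_transpose_mul_mul_mul_transpose {P : Matrix n n R} (hP : Pᵀ * P = 1)
    (A B : Matrix n n R) : P * A * Pᵀ * (P * B * Pᵀ) = P * (A * B) * Pᵀ := by
  simp only [Matrix.mul_assoc]
  rw [← Matrix.mul_assoc Pᵀ P, hP, Matrix.one_mul]

lemma mul_mul_mul_eq_self_of_mul_eq_one {P Q : Matrix n n R} (hPQ : P * Q = 1)
    (X : Matrix n n R) : P * (Q * X * P) * Q = X := by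
  simp only [← Matrix.mul_assoc, hPQ, Matrix.one_mul]
  rw [Matrix.mul_assoc, hPQ, Matrix.mul_one]

def negTransposeConj (P : Matrix n n R) (hP : Pᵀ * P = 1) :
    Matrix n n R ≃ₗ⁅R⁆ Matrix n n R where
  toFun X := -(P * Xᵀ * Pᵀ)
  invFun X := -(Pᵀ * Xᵀ * P)
  map_add' X Y := by simp only [transpose_add, Matrix.mul_add, Matrix.add_mul, neg_add]
  map_smul' c X := by simp only [transpose_smul, Matrix.mul_smul, Matrix.smul_mul, smul_neg,
    RingHom.id_apply]
  map_lie' {X Y} := by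
    simp only [LieRing.of_associative_ring_bracket, transpose_sub, transpose_mul, neg_mul_neg,
      mul_mul_transpose_mul_mul_mul_transpose hP, Matrix.mul_sub, Matrix.sub_mul, neg_sub]
  left_inv X := by
    simp only [transpose_neg, transpose_mul, transpose_transpose, Matrix.mul_neg, Matrix.neg_mul,
      neg_neg]
    rw [← Matrix.mul_assoc P X]
    exact mul_mul_mul_eq_self_of_mul_eq_one hP X
  right_inv X := by
    simp only [transpose_neg, transpose_mul, transpose_transpose, Matrix.mul_neg, Matrix.neg_mul,
      neg_neg]
    rw [← Matrix.mul_assoc Pᵀ X]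
    exact mul_mul_mul_eq_self_of_mul_eq_one (mul_eq_one_comm.mp hP) X

section

variable {P : Matrix n n R} (hP : Pᵀ * P = 1)

@[simp]
lemma negTransposeConj_apply (X : Matrix n n R) :
    negTransposeConj P hP X = -(P * Xᵀ * Pᵀ) := rfl

lemma negTransposeConj_negTransposeConj {Q : Matrix n n R} (hQ : Qᵀ * Q = 1)
    (X : Matrix n n R) :
    negTransposeConj P hP (negTransposeConj Q hQ X) = P * Q * X * (P * Q)ᵀ := by
  simp only [negTransposeConj_apply, transpose_neg, transpose_mul, transpose_transpose,
    Matrix.mul_neg, Matrix.neg_mul, neg_neg, Matrix.mul_assoc]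

lemma trace_negTransposeConj (X : Matrix n n R) :
    trace (negTransposeConj P hP X) = -trace X := by
  rw [negTransposeConj_apply, trace_neg, trace_mul_cycle, hP, Matrix.one_mul, trace_transpose]

lemma map_sl_negTransposeConj :
    (LieAlgebra.SpecialLinear.sl n R).map (negTransposeConj P hP : Matrix n n R →ₗ⁅R⁆ _) =
      LieAlgebra.SpecialLinear.sl n R := by
  have mem_sl (X : Matrix n n R) : X ∈ LieAlgebra.SpecialLinear.sl n R ↔ trace X = 0 := Iff.rfl
  ext X
  simp only [LieSubalgebra.mem_map, mem_sl]
  constructor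
  · rintro ⟨Y, hY, rfl⟩
    rw [LieEquiv.coe_toLieHom, trace_negTransposeConj, hY, neg_zero]
  · intro hX
    refine ⟨(negTransposeConj P hP).symm X, ?_, (negTransposeConj P hP).apply_symm_apply X⟩
    rw [← neg_eq_zero, ← trace_negTransposeConj hP, LieEquiv.apply_symm_apply, hX]

def slNegTransposeConj :
    LieAlgebra.SpecialLinear.sl n R ≃ₗ⁅R⁆ LieAlgebra.SpecialLinear.sl n R :=
  (negTransposeConj P hP).ofSubalgebras _ _ (map_sl_negTransposeConj hP)

@[simp]
lemma coe_slNegTransposeConj (X : LieAlgebra.SpecialLinear.sl n R) :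
    (slNegTransposeConj hP X : Matrix n n R) = negTransposeConj P hP X := rfl

end

def signedPerm (σ : Equiv.Perm n) (ε : n → R) : Matrix n n R :=
  of fun i j => if j = σ i then ε i else 0

section

variable (σ : Equiv.Perm n) {ε : n → R}

lemma signedPerm_mul_apply (M : Matrix n n R) (i j : n) :
    (signedPerm σ ε * M) i j = ε i * M (σ i) j := by
  simp [signedPerm, mul_apply, ite_mul]

lemma mul_transpose_signedPerm_apply (M : Matrix n n R) (i j : n) :
    (M * (signedPerm σ ε)ᵀ) i j = M i (σ j) * ε j := by
  simp [signedPerm, mul_apply, mul_ite]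

lemma transpose_signedPerm_mul_self (hε : ∀ i, ε i * ε i = 1) :
    (signedPerm σ ε)ᵀ * signedPerm σ ε = 1 := by
  refine mul_eq_one_comm.mp (ext fun i j => ?_)
  rw [mul_transpose_signedPerm_apply, signedPerm, of_apply, one_apply]
  by_cases h : i = j
  · simp [h, hε]
  · simp [h, Ne.symm h]

lemma negTransposeConj_signedPerm_apply (hP : (signedPerm σ ε)ᵀ * signedPerm σ ε = 1)
    (X : Matrix n n R) (i j : n) :
    negTransposeConj _ hP X i j = -(ε i * ε j * X (σ j) (σ i)) := by
  rw [negTransposeConj_apply, neg_apply, mul_transpose_signedPerm_apply, signedPerm_mul_apply,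
    transpose_apply]
  ring

lemma negTransposeConj_signedPerm_single (hP : (signedPerm σ ε)ᵀ * signedPerm σ ε = 1)
    (p q : n) (c : R) :
    negTransposeConj _ hP (single p q c) =
      single (σ.symm q) (σ.symm p) (-(ε (σ.symm q) * ε (σ.symm p) * c)) := by
  ext i j
  rw [negTransposeConj_signedPerm_apply]
  simp only [single, of_apply, Equiv.symm_apply_eq]
  split_ifs with h₁ h₂ h₂
  · rw [h₁.1, h₁.2, Equiv.symm_apply_apply, Equiv.symm_apply_apply]
  · exact absurd h₁.symm h₂
  · exact absurd h₂.symm h₁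
  · ring

end

def coordReflection (i₀ : n) : Matrix n n R :=
  signedPerm 1 fun i => if i = i₀ then -1 else 1

lemma transpose_coordReflection_mul_self (i₀ : n) :
    (coordReflection i₀ : Matrix n n R)ᵀ * coordReflection i₀ = 1 :=
  transpose_signedPerm_mul_self 1 fun i => by split_ifs <;> simp

lemma negTransposeConj_coordReflection_apply {i₀ : n} {X : Matrix n n R}
    (hX : ∀ j, X i₀ j = 0) (i j : n) :
    negTransposeConj _ (transpose_coordReflection_mul_self i₀) X i j =
      if i = i₀ then X j i₀ else if j = i₀ then 0 else -X j i := by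
  refine (negTransposeConj_signedPerm_apply 1 _ X i j).trans ?_
  by_cases hi : i = i₀ <;> by_cases hj : j = i₀ <;> simp [hi, hj, hX]

def altAntidiag (m : ℕ) : Matrix (Fin m) (Fin m) R :=
  signedPerm Fin.revPerm fun i => (-1) ^ (i : ℕ)

lemma transpose_altAntidiag_mul_self (m : ℕ) :
    (altAntidiag m : Matrix (Fin m) (Fin m) R)ᵀ * altAntidiag m = 1 :=
  transpose_signedPerm_mul_self _ fun i => by rw [← mul_pow]; simp

lemma negTransposeConj_altAntidiag_single {m : ℕ} (p q : Fin m) (c : R) :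
    negTransposeConj _ (transpose_altAntidiag_mul_self m) (single p q c) =
      single q.rev p.rev (-((-1) ^ (q.rev : ℕ) * (-1) ^ (p.rev : ℕ) * c)) :=
  negTransposeConj_signedPerm_single Fin.revPerm _ p q c

end Matrix

namespace Paper

open Matrix LieAlgebra.SpecialLinear

attribute [local instance 100] LieRing.ofAssociativeRing

variable (n : ℕ)

lemma gCar_le_sl : gCar n ≤ sl (Fin (n + 2)) ℂ := fun _ hX => hX.2

def phi : gCar n →ₗ⁅ℂ⁆ sl (Fin (n + 2)) ℂ :=
  LieSubalgebra.inclusion (gCar_le_sl n)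

def theta : gCar n →ₗ⁅ℂ⁆ sl (Fin (n + 2)) ℂ :=
  (slNegTransposeConj (transpose_coordReflection_mul_self 0)).toLieHom.comp (phi n)

def xi : sl (Fin (n + 2)) ℂ →ₗ⁅ℂ⁆ sl (Fin (n + 2)) ℂ :=
  (slNegTransposeConj (transpose_altAntidiag_mul_self (n + 2))).toLieHom

lemma injective_phi : Function.Injective (phi n) :=
  LieSubalgebra.inclusion_injective _

lemma injective_theta : Function.Injective (theta n) := by
  rw [theta, LieHom.coe_comp]
  exact (LieEquiv.injective _).comp (injective_phi n)

lemma bijective_xi : Function.Bijective (xi n) :=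
  LieEquiv.bijective _

lemma isTheta_theta : IsTheta n (theta n) :=
  fun x => negTransposeConj_coordReflection_apply x.2.1

lemma chevCond_xi : ChevCond n (xi n) := by
  intro i
  refine ⟨fun x hx => ?_, fun x hx => ?_, fun x hx => ?_⟩
  all_goals
    simp only [xi, LieEquiv.coe_toLieHom, coe_slNegTransposeConj, hx, map_sub,
      negTransposeConj_altAntidiag_single, Fin.rev_succ, Fin.rev_castSucc]
  · simp [pow_succ, ← mul_pow]
  · simp [pow_succ, ← mul_pow]
  · simp only [← mul_pow, mul_neg, neg_neg, one_pow, mul_one, ← single_neg]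
    abel

lemma conjEquiv_xi_comp_theta : conjEquiv n ((xi n).comp (theta n)) (phi n) := by
  set K : Matrix (Fin (n + 2)) (Fin (n + 2)) ℂ := altAntidiag (n + 2) * coordReflection 0
  have hK : Kᵀ * K = 1 := by
    rw [transpose_mul, Matrix.mul_assoc, ← Matrix.mul_assoc (altAntidiag _)ᵀ,
      transpose_altAntidiag_mul_self, Matrix.one_mul, transpose_coordReflection_mul_self]
  refine ⟨⟨Kᵀ, K, hK, mul_eq_one_comm.mp hK⟩, fun x => ?_⟩
  simp only [LieHom.comp_apply, xi, theta, LieEquiv.coe_toLieHom, coe_slNegTransposeConj,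
    negTransposeConj_negTransposeConj, Units.val_mk, Units.inv_mk]
  exact (mul_mul_mul_eq_self_of_mul_eq_one hK _).symm

end Paper

open Paper in
/-- Proposition 2.8: if `Ξ` is the automorphism of `sl(n+2, ℂ)` induced by
the order-reversing Dynkin diagram automorphism, then the embedding `Ξ ∘ Θ` of
`sl(n+1) ⋉ ℂ^{n+1}` into `sl(n+2, ℂ)` is equivalent (conjugate by an inner automorphism)
to the embedding `Φ`. -/
theorem stmt_6 (n : ℕ) :
    ∃ (Φ Θ : gCar n →ₗ⁅ℂ⁆ LieAlgebra.SpecialLinear.sl (Fin (n + 2)) ℂ)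
      (Ξ : LieAlgebra.SpecialLinear.sl (Fin (n + 2)) ℂ →ₗ⁅ℂ⁆
        LieAlgebra.SpecialLinear.sl (Fin (n + 2)) ℂ),
      Function.Injective Φ ∧ Function.Injective Θ ∧ Function.Bijective Ξ ∧
      IsPhi n Φ ∧ IsTheta n Θ ∧ ChevCond n Ξ ∧
      conjEquiv n (Ξ.comp Θ) Φ :=
  ⟨phi n, theta n, xi n, injective_phi n, injective_theta n, bijective_xi n, fun _ => rfl,
    isTheta_theta n, chevCond_xi n, conjEquiv_xi_comp_theta n⟩
end

section
/- Let V be a module over sl(n+1) ⋉ C^{n+1} and let v_μ ∈ V be a highest weight vector for sl(n+1) of weight μ. For 1 ≤ i ≤ n+1 define φ_i(v_μ) = P_i^{(μ(i))}(v_μ) + Σ_{k=1}^{i−1} Q_k^{(μ(i−1))} P_k^{(μ(i))}(v_μ). Then φ_i(v_μ) is either zero or a highest weight vector for sl(n+1) of weight μ + ω_i − ω_{i−1}. -/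
open Module

namespace Paper

/-- The pairing `(α_i, α_{p,q})` (value of the root `α_{p,q} = α_p + ⋯ + α_q`
on the coroot `H_i`) for `sl`, in the paper's normalization. -/
def pair (i p q : ℕ) : ℤ :=
  (if i = p then 1 else 0) + (if i = q then 1 else 0)
    - (if i + 1 = p then 1 else 0) - (if i = q + 1 then 1 else 0)

/-- A module over `sl(N+1, ℂ)`, described through the action of the Chevalley-type
generators `H_i` (`1 ≤ i ≤ N`), `E_{p,q}`, `F_{p,q}` (`1 ≤ p ≤ q ≤ N`), subject to the
structure relations (2.7) of the paper.  Indices outside the valid ranges are junk. -/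
structure SLRep (N : ℕ) (M : Type) [AddCommGroup M] [Module ℂ M] where
  H : ℕ → Module.End ℂ M
  E : ℕ → ℕ → Module.End ℂ M
  F : ℕ → ℕ → Module.End ℂ M
  hHH : ∀ i j, 1 ≤ i → i ≤ N → 1 ≤ j → j ≤ N → ⁅H i, H j⁆ = 0
  hHE : ∀ i p q, 1 ≤ i → i ≤ N → 1 ≤ p → p ≤ q → q ≤ N →
    ⁅H i, E p q⁆ = ((pair i p q : ℤ) : ℂ) • E p q
  hHF : ∀ i p q, 1 ≤ i → i ≤ N → 1 ≤ p → p ≤ q → q ≤ N →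
    ⁅H i, F p q⁆ = -(((pair i p q : ℤ) : ℂ)) • F p q
  hEE : ∀ p q r s, 1 ≤ p → p ≤ q → q ≤ N → 1 ≤ r → r ≤ s → s ≤ N →
    ⁅E p q, E r s⁆ = (if q + 1 = r then E p s else 0) - (if p = s + 1 then E r q else 0)
  hFF : ∀ p q r s, 1 ≤ p → p ≤ q → q ≤ N → 1 ≤ r → r ≤ s → s ≤ N →
    ⁅F p q, F r s⁆ = (if p = s + 1 then F r q else 0) - (if q + 1 = r then F p s else 0)
  hEF : ∀ p q r s, 1 ≤ p → p ≤ q → q ≤ N → 1 ≤ r → r ≤ s → s ≤ N →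
    ⁅E p q, F r s⁆ =
      (if p = r ∧ q = s then ∑ t ∈ Finset.Icc p q, H t else 0)
      + (if p = r ∧ q < s then -F (q + 1) s else 0)
      + (if p = r ∧ s < q then -E (s + 1) q else 0)
      + (if q = s ∧ p < r then E p (r - 1) else 0)
      + (if q = s ∧ r < p then F r (p - 1) else 0)

/-- A module over the perfect Lie algebra `sl(n+1) ⋉ ℂ^{n+1}`:
an `sl(n+1)`-module together with the action of the radical generators
`P_j` (`1 ≤ j ≤ n+1`), subject to the remaining relations of (2.7). -/
structure SLPRep (n : ℕ) (M : Type) [AddCommGroup M] [Module ℂ M] extends SLRep n M where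
  P : ℕ → Module.End ℂ M
  hHP : ∀ i j, 1 ≤ i → i ≤ n → 1 ≤ j → j ≤ n + 1 →
    ⁅H i, P j⁆ = (((if i = j then 1 else 0) - (if i + 1 = j then 1 else 0) : ℤ) : ℂ) • P j
  hEP : ∀ p q j, 1 ≤ p → p ≤ q → q ≤ n → 1 ≤ j → j ≤ n + 1 →
    ⁅E p q, P j⁆ = if q + 1 = j then P p else 0
  hFP : ∀ p q j, 1 ≤ p → p ≤ q → q ≤ n → 1 ≤ j → j ≤ n + 1 →
    ⁅F p q, P j⁆ = if p = j then P (q + 1) else 0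
  hPP : ∀ i j, 1 ≤ i → i ≤ n + 1 → 1 ≤ j → j ≤ n + 1 → ⁅P i, P j⁆ = 0

/-- `μ_{k,s} = -((μ_k + 1) + ⋯ + (μ_s + 1))` (Definition 3.4). -/
def mus (μ : ℕ → ℤ) (k s : ℕ) : ℤ := -(∑ i ∈ Finset.Icc k s, (μ i + 1))

section Alg

variable {A : Type} [Ring A] [Algebra ℂ A]

/-- `F^{(μ(s))}_{i,j} = (∏_{k=i+1}^{j} μ_{k,s}) F_{i,j}` (Definition 3.6). -/
def Fm (F : ℕ → ℕ → A) (μ : ℕ → ℤ) (s i j : ℕ) : A :=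
  (((∏ k ∈ Finset.Icc (i + 1) j, mus μ k s : ℤ)) : ℂ) • F i j

/-- `P^{(μ(s))}_{i} = (∏_{k=1}^{i-1} μ_{k,s-1}) P_i` (Definition 3.6). -/
def Pm (P : ℕ → A) (μ : ℕ → ℤ) (s i : ℕ) : A :=
  (((∏ k ∈ Finset.Icc 1 (i - 1), mus μ k (s - 1) : ℤ)) : ℂ) • P i

/-- The elements `Q^{(μ(s))}_k` of Definition 3.7, defined by the recursion
`Q^{(μ(s))}_{s+1} = 1`, `Q^{(μ(s))}_{s-k} = ∑_{l=0}^{k} Q^{(μ(s))}_{s-l+1} F^{(μ(s))}_{s-k,s-l}`. -/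
noncomputable def Qop (F : ℕ → ℕ → A) (μ : ℕ → ℤ) (s k : ℕ) : A :=
  if s + 1 ≤ k then 1
  else ∑ l ∈ (Finset.range (s + 1 - k)).attach,
      Qop F μ s (s - l.1 + 1) * Fm F μ s k (s - l.1)
termination_by s + 1 - k
decreasing_by
  have := l.2; simp only [Finset.mem_range] at this; omega

/-- The elements `R^{(μ(s))}_{i,k}` of Definition 3.8:
`R^{(μ(s))}_{i,0} = 1`, `R^{(μ(s))}_{i,k} = ∑_{l=0}^{k-1} F^{(μ(s))}_{i+l,i+k-1} R^{(μ(s))}_{i,l}`. -/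
noncomputable def Rop (F : ℕ → ℕ → A) (μ : ℕ → ℤ) (s i : ℕ) : ℕ → A
  | 0 => 1
  | k + 1 => ∑ l ∈ (Finset.range (k + 1)).attach,
      Fm F μ s (i + l.1) (i + k) * Rop F μ s i l.1
termination_by k => k
decreasing_by
  have := l.2; simp only [Finset.mem_range] at this; omega

end Alg

variable {M : Type} [AddCommGroup M] [Module ℂ M]

/-- The operator `φ_i` at weight `μ`:
`φ_i = P^{(μ(i))}_i + ∑_{k=1}^{i-1} Q^{(μ(i-1))}_k P^{(μ(i))}_k` (Theorem 3.12). -/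
noncomputable def PhiOp (F : ℕ → ℕ → Module.End ℂ M) (P : ℕ → Module.End ℂ M)
    (μ : ℕ → ℤ) (i : ℕ) : Module.End ℂ M :=
  Pm P μ i i + ∑ k ∈ Finset.Icc 1 (i - 1), Qop F μ (i - 1) k * Pm P μ i k

/-- The weight shift `μ ↦ μ + ω_i - ω_{i-1}` in fundamental-weight coordinates. -/
def wsh (i : ℕ) (μ : ℕ → ℤ) : ℕ → ℤ := fun l =>
  μ l + (if l = i then 1 else 0) - (if l + 1 = i then 1 else 0)

/-- `v` is a highest weight vector of weight `μ` for the `sl(N+1)`-action. -/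
def IsHWvec (N : ℕ) (Hop : ℕ → Module.End ℂ M) (Eop : ℕ → ℕ → Module.End ℂ M)
    (μ : ℕ → ℤ) (v : M) : Prop :=
  (∀ i, 1 ≤ i → i ≤ N → Hop i v = ((μ i : ℤ) : ℂ) • v) ∧
  (∀ p q, 1 ≤ p → p ≤ q → q ≤ N → Eop p q v = 0)

/-- Successively apply the operators `φ_i`, for `i` running through a list,
keeping track of the weight shifts. -/
noncomputable def phiList (F : ℕ → ℕ → Module.End ℂ M) (P : ℕ → Module.End ℂ M) :
    List ℕ → (ℕ → ℤ) → M → M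
  | [], _, v => v
  | i :: L, μ, v => phiList F P L (wsh i μ) (PhiOp F P μ i v)

/-- Turn a list of exponents `[k_1, …, k_r]` (starting label `j`) into the list
`j, …, j (k_1 times), j+1, …`; applying `phiList` along it computes
`φ_{j+r-1}^{k_r}(⋯(φ_j^{k_1}(v))⋯)`. -/
def expList : List ℕ → ℕ → List ℕ
  | [], _ => []
  | m :: iv, j => List.replicate m j ++ expList iv (j + 1)

/-- The list encoding `φ_{k-1}^{i_{k-1}}(⋯(φ_1^{i_1}(v))⋯)` for the exponents `i_1, …, i_{k-1}`. -/
def evec (k : ℕ) (iv : ℕ → ℕ) : List ℕ :=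
  (List.range (k - 1)).flatMap fun t => List.replicate (iv (t + 1)) (t + 1)

/-- A submodule is invariant under the `sl(N+1)`-action. -/
def slInvariant (N : ℕ) (Hop : ℕ → Module.End ℂ M) (Eop Fop : ℕ → ℕ → Module.End ℂ M)
    (Ns : Submodule ℂ M) : Prop :=
  (∀ i, 1 ≤ i → i ≤ N → ∀ v ∈ Ns, Hop i v ∈ Ns) ∧
  (∀ p q, 1 ≤ p → p ≤ q → q ≤ N → ∀ v ∈ Ns, Eop p q v ∈ Ns ∧ Fop p q v ∈ Ns)

/-- A submodule is invariant under the full `sl(n+1) ⋉ ℂ^{n+1}`-action. -/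
def gInvariant (n : ℕ) (Hop : ℕ → Module.End ℂ M) (Eop Fop : ℕ → ℕ → Module.End ℂ M)
    (Pop : ℕ → Module.End ℂ M) (Ns : Submodule ℂ M) : Prop :=
  slInvariant n Hop Eop Fop Ns ∧ ∀ j, 1 ≤ j → j ≤ n + 1 → ∀ v ∈ Ns, Pop j v ∈ Ns

/-- `U(sl(N+1))·v`: the smallest `sl(N+1)`-invariant subspace containing `v`. -/
def slGen (N : ℕ) (Hop : ℕ → Module.End ℂ M) (Eop Fop : ℕ → ℕ → Module.End ℂ M)
    (v : M) : Submodule ℂ M :=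
  sInf {Ns | slInvariant N Hop Eop Fop Ns ∧ v ∈ Ns}

/-- `U(sl(n+1) ⋉ ℂ^{n+1})·v`. -/
def gGen (n : ℕ) (Hop : ℕ → Module.End ℂ M) (Eop Fop : ℕ → ℕ → Module.End ℂ M)
    (Pop : ℕ → Module.End ℂ M) (v : M) : Submodule ℂ M :=
  sInf {Ns | gInvariant n Hop Eop Fop Pop Ns ∧ v ∈ Ns}

end Paper

/-!
Write `Q_k = Q^{(μ(i-1))}_k`, so that `φ_i = ∑_{k ≤ i} Q_k P^{(μ(i))}_k` with `Q_i = 1`. Every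
term `Q_k P_k v` has weight `μ + ω_i - ω_{i-1}`, and the `E_{p,q}` are iterated brackets of the
simple `E_t`, so it remains to see `E_t φ_i(v) = 0`. Commuting `E_t` through the recursion of the
`Q_j` gives, for `j ≤ t < i`,
`[E_t, Q_j] = Q_{t+1} ((H_t - μ_t - 1) R_j - δ_{j,t} μ_{t,i-1})`,
where `R_j` is the same recursion stopped at `t - 1`. By weight, `H_t - μ_t - 1` kills
`R_k P_k v`, so `E_t φ_i(v) = (c_{t+1} - μ_{t,i-1} c_t) Q_{t+1} P_t v`, where `c_k` is the
coefficient of `P^{(μ(i))}_k`; and `c_{t+1} = c_t μ_{t,i-1}`.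
-/

namespace Paper

section ChainSum

variable {A : Type} [Ring A]

/-- The sum, over the decompositions of `[k, s]` into consecutive blocks, of the products of `G`
along the blocks, the last block leftmost. `Qop F μ s = chainSum (Fm F μ s) s`, while
`chainSum (Fm F μ s) t` with `t < s` keeps the coefficients of `Qop F μ s` but stops at `t`. -/
noncomputable def chainSum (G : ℕ → ℕ → A) (s k : ℕ) : A :=
  if s < k then 1
  else ∑ m ∈ (Finset.Icc k s).attach, chainSum G s (m.1 + 1) * G k m.1
termination_by s + 1 - k
decreasing_by have := Finset.mem_Icc.1 m.2; omega

variable {G : ℕ → ℕ → A} {s k : ℕ}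

theorem chainSum_of_lt (h : s < k) : chainSum G s k = 1 := by
  rw [chainSum, if_pos h]

theorem chainSum_of_le (h : k ≤ s) :
    chainSum G s k = ∑ m ∈ Finset.Icc k s, chainSum G s (m + 1) * G k m := by
  rw [chainSum, if_neg (not_lt.2 h),
    Finset.sum_attach (Finset.Icc k s) fun m => chainSum G s (m + 1) * G k m]

theorem commute_chainSum {a : A} (h : ∀ j m, k ≤ j → j ≤ m → m ≤ s → Commute a (G j m)) :
    Commute a (chainSum G s k) := by
  induction hd : s + 1 - k using Nat.strong_induction_on generalizing k with
  | _ d ih =>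
  rcases lt_or_ge s k with hk | hk
  · rw [chainSum_of_lt hk]
    exact Commute.one_right a
  · rw [chainSum_of_le hk]
    refine Commute.sum_right _ _ _ fun m hm => ?_
    rw [Finset.mem_Icc] at hm
    exact (ih _ (by omega) (fun j m' hj => h j m' (by omega)) rfl).mul_right
      (h k m le_rfl hm.1 hm.2)

theorem lie_chainSum (a : A) (h : k ≤ s) :
    ⁅a, chainSum G s k⁆ =
      ∑ m ∈ Finset.Icc k s,
        (⁅a, chainSum G s (m + 1)⁆ * G k m + chainSum G s (m + 1) * ⁅a, G k m⁆) := by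
  rw [chainSum_of_le h]
  simp only [Ring.lie_def, Finset.mul_sum, Finset.sum_mul, ← Finset.sum_sub_distrib]
  refine Finset.sum_congr rfl fun m _ => ?_
  noncomm_ring

end ChainSum

theorem Qop_eq_chainSum {A : Type} [Ring A] [Algebra ℂ A] (F : ℕ → ℕ → A) (μ : ℕ → ℤ)
    (s k : ℕ) : Qop F μ s k = chainSum (Fm F μ s) s k := by
  induction hd : s + 1 - k using Nat.strong_induction_on generalizing k with
  | _ d ih =>
  rcases lt_or_ge s k with hk | hk
  · rw [Qop, if_pos (Nat.succ_le_of_lt hk), chainSum_of_lt hk]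
  · rw [Qop, if_neg (by omega), chainSum_of_le hk,
      Finset.sum_attach (Finset.range _) fun l => Qop F μ s (s - l + 1) * Fm F μ s k (s - l)]
    refine Finset.sum_nbij' (fun l => s - l) (fun m => s - m) ?_ ?_ ?_ ?_ ?_ <;>
      simp only [Finset.mem_range, Finset.mem_Icc]
    · intro l hl; omega
    · intro m hm; omega
    · intro l hl; omega
    · intro m hm; omega
    · intro l hl
      rw [ih _ (by omega) _ rfl]

variable {M : Type} [AddCommGroup M] [Module ℂ M]

theorem PhiOp_eq_sum (F : ℕ → ℕ → Module.End ℂ M) (P : ℕ → Module.End ℂ M) (μ : ℕ → ℤ) (s : ℕ) :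
    PhiOp F P μ (s + 1) =
      ∑ k ∈ Finset.Icc 1 (s + 1), chainSum (Fm F μ s) s k * Pm P μ (s + 1) k := by
  rw [PhiOp, Finset.sum_Icc_succ_top (by omega), Nat.add_sub_cancel, add_comm,
    chainSum_of_lt (Nat.lt_succ_self s), one_mul]
  simp only [Qop_eq_chainSum]

theorem apply_apply_eq_add_lie (a b : Module.End ℂ M) (w : M) : a (b w) = b (a w) + ⁅a, b⁆ w := by
  rw [Ring.lie_def, LinearMap.sub_apply, Module.End.mul_apply, Module.End.mul_apply]
  abel

section Weights

def weightSpace (N : ℕ) (H : ℕ → Module.End ℂ M) (ν : ℕ → ℤ) : Submodule ℂ M :=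
  ⨅ u ∈ Finset.Icc 1 N, (H u).eigenspace (ν u : ℂ)

variable {N : ℕ} {H : ℕ → Module.End ℂ M}

theorem mem_weightSpace {ν : ℕ → ℤ} {w : M} :
    w ∈ weightSpace N H ν ↔ ∀ u, 1 ≤ u → u ≤ N → H u w = (ν u : ℂ) • w := by
  simp [weightSpace, Submodule.mem_iInf, and_imp]

theorem weightSpace_congr {ν ν' : ℕ → ℤ} (h : ∀ u, 1 ≤ u → u ≤ N → ν u = ν' u) :
    weightSpace N H ν = weightSpace N H ν' :=
  iInf_congr fun u => iInf_congr fun hu => by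
    rw [Finset.mem_Icc] at hu
    rw [h u hu.1 hu.2]

def posRoot (p q : ℕ) : ℕ → ℤ := fun u => pair u p q

theorem posRoot_add (k m s : ℕ) : posRoot k m + posRoot (m + 1) s = posRoot k s := by
  funext u
  simp only [posRoot, pair, Pi.add_apply]
  split_ifs <;> omega

theorem chainSum_mem_weightSpace {G : ℕ → ℕ → Module.End ℂ M} {s k : ℕ}
    (hG : ∀ j m, k ≤ j → j ≤ m → m ≤ s → ∀ ν, ∀ w ∈ weightSpace N H ν,
      G j m w ∈ weightSpace N H (ν - posRoot j m))
    (hks : k ≤ s) {ν : ℕ → ℤ} {w : M} (hw : w ∈ weightSpace N H ν) :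
    chainSum G s k w ∈ weightSpace N H (ν - posRoot k s) := by
  induction hd : s - k using Nat.strong_induction_on generalizing k ν w with
  | _ d ih =>
  rw [chainSum_of_le hks, LinearMap.sum_apply]
  refine Submodule.sum_mem _ fun m hm => ?_
  rw [Finset.mem_Icc] at hm
  have hGw := hG k m le_rfl hm.1 hm.2 ν w hw
  rw [Module.End.mul_apply]
  rcases hm.2.lt_or_eq with hms | rfl
  · have := ih (s - (m + 1)) (by omega) (fun j m' hj => hG j m' (by omega)) (by omega) hGw rfl
    rwa [sub_sub, posRoot_add] at this
  · rwa [chainSum_of_lt (Nat.lt_succ_self m), Module.End.one_apply]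

end Weights

theorem SLRep.F_mem_weightSpace {N : ℕ} (ρ : SLRep N M) {p q : ℕ} (hp : 1 ≤ p) (hpq : p ≤ q)
    (hqN : q ≤ N) {ν : ℕ → ℤ} {w : M} (hw : w ∈ weightSpace N ρ.H ν) :
    ρ.F p q w ∈ weightSpace N ρ.H (ν - posRoot p q) := by
  rw [mem_weightSpace] at hw ⊢
  intro u hu huN
  rw [apply_apply_eq_add_lie, ρ.hHF u p q hu huN hp hpq hqN, hw u hu huN, map_smul,
    LinearMap.smul_apply, Pi.sub_apply, posRoot]
  push_cast
  module

theorem SLRep.chainSum_Fm_mem_weightSpace {N : ℕ} (ρ : SLRep N M) (μ : ℕ → ℤ) {s' s k : ℕ}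
    (hk : 1 ≤ k) (hks : k ≤ s) (hsN : s ≤ N) {ν : ℕ → ℤ} {w : M}
    (hw : w ∈ weightSpace N ρ.H ν) :
    chainSum (Fm ρ.F μ s') s k w ∈ weightSpace N ρ.H (ν - posRoot k s) := by
  refine chainSum_mem_weightSpace (fun j m hj hjm hms ν w hw => ?_) hks hw
  rw [Fm, LinearMap.smul_apply]
  exact Submodule.smul_mem _ _ (ρ.F_mem_weightSpace (by omega) hjm (by omega) hw)

theorem SLPRep.P_mem_weightSpace {n : ℕ} (ρ : SLPRep n M) {j : ℕ} (hj : 1 ≤ j) (hjn : j ≤ n + 1)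
    {ν : ℕ → ℤ} {w : M} (hw : w ∈ weightSpace n ρ.H ν) :
    ρ.P j w ∈ weightSpace n ρ.H (wsh j ν) := by
  rw [mem_weightSpace] at hw ⊢
  intro u hu hun
  rw [apply_apply_eq_add_lie, ρ.hHP u j hu hun hj hjn, hw u hu hun, map_smul,
    LinearMap.smul_apply, wsh]
  push_cast
  module

theorem SLPRep.chainSum_Fm_P_mem_weightSpace {n : ℕ} (ρ : SLPRep n M) (μ' : ℕ → ℤ)
    {s' s k : ℕ} (hk : 1 ≤ k) (hks : k ≤ s + 1) (hsn : s ≤ n) {μ : ℕ → ℤ} {v : M}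
    (hv : v ∈ weightSpace n ρ.H μ) :
    chainSum (Fm ρ.F μ' s') s k (ρ.P k v) ∈ weightSpace n ρ.H (wsh (s + 1) μ) := by
  have hP := ρ.P_mem_weightSpace hk (by omega) hv
  rcases hks.lt_or_eq with hks | rfl
  · rw [weightSpace_congr (ν' := wsh k μ - posRoot k s)]
    · exact ρ.chainSum_Fm_mem_weightSpace μ' hk (by omega) hsn hP
    · intro u _ _
      simp only [wsh, posRoot, pair, Pi.sub_apply]
      split_ifs <;> omega
  · rwa [chainSum_of_lt (Nat.lt_succ_self s), Module.End.one_apply]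

theorem SLPRep.PhiOp_mem_weightSpace {n : ℕ} (ρ : SLPRep n M) {μ : ℕ → ℤ} {v : M}
    (hv : v ∈ weightSpace n ρ.H μ) {i : ℕ} (hi1 : 1 ≤ i) (hi2 : i ≤ n + 1) :
    PhiOp ρ.F ρ.P μ i v ∈ weightSpace n ρ.H (wsh i μ) := by
  obtain ⟨s, rfl⟩ : ∃ s, i = s + 1 := ⟨i - 1, by omega⟩
  rw [PhiOp_eq_sum, LinearMap.sum_apply]
  refine Submodule.sum_mem _ fun k hk => ?_
  rw [Finset.mem_Icc] at hk
  rw [Module.End.mul_apply, Pm, LinearMap.smul_apply, map_smul]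
  exact Submodule.smul_mem _ _ (ρ.chainSum_Fm_P_mem_weightSpace μ hk.1 hk.2 (by omega) hv)

theorem mus_eq_neg_add (μ : ℕ → ℤ) {t s : ℕ} (h : t ≤ s) :
    mus μ t s = -(μ t + 1) + mus μ (t + 1) s := by
  rw [mus, mus, ← Finset.add_sum_Ioc_eq_sum_Icc h, Finset.Icc_add_one_left_eq_Ioc]
  ring

theorem lie_smul_right {A : Type} [Ring A] [Algebra ℂ A] (a b : A) (c : ℂ) :
    ⁅a, c • b⁆ = c • ⁅a, b⁆ := by
  rw [Ring.lie_def, Ring.lie_def, mul_smul_comm, smul_mul_assoc, smul_sub]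

namespace SLRep

variable {n : ℕ} (ρ : SLRep n M)

theorem lie_E_F_of_ne {t j m : ℕ} (ht : 1 ≤ t) (htn : t ≤ n) (hj : 1 ≤ j) (hjm : j ≤ m)
    (hmn : m ≤ n) (htj : t ≠ j) (htm : t ≠ m) : ⁅ρ.E t t, ρ.F j m⁆ = 0 := by
  rw [ρ.hEF t t j m ht le_rfl htn hj hjm hmn]
  simp [htj, htm]

theorem lie_E_F_self {t : ℕ} (ht : 1 ≤ t) (htn : t ≤ n) : ⁅ρ.E t t, ρ.F t t⁆ = ρ.H t := by
  rw [ρ.hEF t t t t ht le_rfl htn ht le_rfl htn]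
  simp

theorem lie_E_F_of_lt_right {t m : ℕ} (ht : 1 ≤ t) (htm : t < m) (hmn : m ≤ n) :
    ⁅ρ.E t t, ρ.F t m⁆ = -ρ.F (t + 1) m := by
  rw [ρ.hEF t t t m ht le_rfl (by omega) ht htm.le hmn]
  simp [htm, htm.ne, not_lt.2 htm.le]

theorem lie_E_F_of_lt_left {j t : ℕ} (hj : 1 ≤ j) (hjt : j < t) (htn : t ≤ n) :
    ⁅ρ.E t t, ρ.F j t⁆ = ρ.F j (t - 1) := by
  rw [ρ.hEF t t j t (by omega) le_rfl htn hj hjt.le htn]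
  simp [hjt, hjt.ne', not_lt.2 hjt.le]

variable (μ : ℕ → ℤ) {s : ℕ}

theorem lie_E_Fm_of_ne {t j m : ℕ} (ht : 1 ≤ t) (htn : t ≤ n) (hj : 1 ≤ j) (hjm : j ≤ m)
    (hmn : m ≤ n) (htj : t ≠ j) (htm : t ≠ m) : ⁅ρ.E t t, Fm ρ.F μ s j m⁆ = 0 := by
  rw [Fm, lie_smul_right, ρ.lie_E_F_of_ne ht htn hj hjm hmn htj htm, smul_zero]

theorem lie_E_Fm_self {t : ℕ} (ht : 1 ≤ t) (htn : t ≤ n) :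
    ⁅ρ.E t t, Fm ρ.F μ s t t⁆ = ρ.H t := by
  rw [Fm, Finset.Icc_eq_empty (by omega), Finset.prod_empty, Int.cast_one, one_smul,
    ρ.lie_E_F_self ht htn]

theorem lie_E_Fm_of_lt_right {t m : ℕ} (ht : 1 ≤ t) (htm : t < m) (hmn : m ≤ n) :
    ⁅ρ.E t t, Fm ρ.F μ s t m⁆ = -(mus μ (t + 1) s : ℂ) • Fm ρ.F μ s (t + 1) m := by
  rw [Fm, Fm, lie_smul_right, ρ.lie_E_F_of_lt_right ht htm hmn,
    ← Finset.mul_prod_Ioc_eq_prod_Icc (by omega : t + 1 ≤ m), ← Finset.Icc_add_one_left_eq_Ioc]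
  push_cast
  module

theorem lie_E_Fm_of_lt_left {j t : ℕ} (hj : 1 ≤ j) (hjt : j < t) (htn : t ≤ n) :
    ⁅ρ.E t t, Fm ρ.F μ s j t⁆ = (mus μ t s : ℂ) • Fm ρ.F μ s j (t - 1) := by
  obtain ⟨t, rfl⟩ : ∃ t', t = t' + 1 := ⟨t - 1, by omega⟩
  rw [Fm, Fm, lie_smul_right, ρ.lie_E_F_of_lt_left hj hjt htn,
    Finset.prod_Icc_succ_top (by omega : j + 1 ≤ t + 1), Nat.add_sub_cancel]
  push_cast
  module

theorem commute_E_chainSum {s' k t : ℕ} (ht : 1 ≤ t) (htn : t ≤ n) (hk : 1 ≤ k) (hsn : s ≤ n)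
    (h : t < k ∨ s < t) : Commute (ρ.E t t) (chainSum (Fm ρ.F μ s') s k) :=
  commute_chainSum fun _ _ hkj hjm hms => commute_iff_lie_eq.2 <|
    ρ.lie_E_Fm_of_ne μ ht htn (by omega) hjm (by omega) (by omega) (by omega)

theorem lie_E_chainSum_self {t : ℕ} (ht : 1 ≤ t) (hts : t ≤ s) (hsn : s ≤ n) :
    ⁅ρ.E t t, chainSum (Fm ρ.F μ s) s t⁆ =
      chainSum (Fm ρ.F μ s) s (t + 1) * (ρ.H t - (mus μ (t + 1) s : ℂ) • 1) := by
  have hcomm : ∀ m ∈ Finset.Icc t s, ⁅ρ.E t t, chainSum (Fm ρ.F μ s) s (m + 1)⁆ = 0 :=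
    fun m hm => commute_iff_lie_eq.1 <| ρ.commute_E_chainSum μ ht (by omega) (by omega) hsn
      (Or.inl (by simp only [Finset.mem_Icc] at hm; omega))
  have htail : ∑ m ∈ Finset.Ioc t s, chainSum (Fm ρ.F μ s) s (m + 1) * ⁅ρ.E t t, Fm ρ.F μ s t m⁆
      = -(mus μ (t + 1) s : ℂ) • chainSum (Fm ρ.F μ s) s (t + 1) := by
    rcases hts.lt_or_eq with hts | rfl
    · rw [chainSum_of_le (show t + 1 ≤ s by omega), Finset.smul_sum,
        ← Finset.Icc_add_one_left_eq_Ioc]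
      refine Finset.sum_congr rfl fun m hm => ?_
      rw [Finset.mem_Icc] at hm
      rw [ρ.lie_E_Fm_of_lt_right μ ht (by omega) (by omega), mul_smul_comm]
    · rw [Finset.Ioc_self, Finset.sum_empty, mus, Finset.Icc_eq_empty (by omega)]
      simp
  rw [lie_chainSum _ hts, Finset.sum_congr rfl fun m hm => by rw [hcomm m hm, zero_mul, zero_add],
    ← Finset.add_sum_Ioc_eq_sum_Icc hts, htail, ρ.lie_E_Fm_self μ ht (by omega), mul_sub,
    mul_smul_comm, mul_one, sub_eq_add_neg, neg_smul]

theorem lie_E_chainSum_of_lt {t j : ℕ} (hj : 1 ≤ j) (hjt : j < t) (hts : t ≤ s) (hsn : s ≤ n) :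
    ⁅ρ.E t t, chainSum (Fm ρ.F μ s) s j⁆ =
      ∑ m ∈ Finset.Icc j (t - 1), ⁅ρ.E t t, chainSum (Fm ρ.F μ s) s (m + 1)⁆ * Fm ρ.F μ s j m
        + (mus μ t s : ℂ) • (chainSum (Fm ρ.F μ s) s (t + 1) * Fm ρ.F μ s j (t - 1)) := by
  obtain ⟨t, rfl⟩ : ∃ t', t = t' + 1 := ⟨t - 1, by omega⟩
  have hE_Q : ∀ m, t + 1 ≤ m → ⁅ρ.E (t + 1) (t + 1), chainSum (Fm ρ.F μ s) s (m + 1)⁆ = 0 :=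
    fun m hm => commute_iff_lie_eq.1 <|
      ρ.commute_E_chainSum μ (by omega) (by omega) (by omega) hsn (Or.inl (by omega))
  have hhigh : ∀ m ∈ Finset.Icc j s, m ∉ Finset.Icc j (t + 1) →
      ⁅ρ.E (t + 1) (t + 1), chainSum (Fm ρ.F μ s) s (m + 1)⁆ * Fm ρ.F μ s j m
        + chainSum (Fm ρ.F μ s) s (m + 1) * ⁅ρ.E (t + 1) (t + 1), Fm ρ.F μ s j m⁆ = 0 := by
    intro m hm hm'
    simp only [Finset.mem_Icc] at hm hm'
    rw [hE_Q m (by omega), ρ.lie_E_Fm_of_ne μ (by omega) (by omega) hj hm.1 (by omega)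
      (by omega) (by omega), zero_mul, mul_zero, add_zero]
  have hlow : ∀ m ∈ Finset.Icc j t,
      ⁅ρ.E (t + 1) (t + 1), chainSum (Fm ρ.F μ s) s (m + 1)⁆ * Fm ρ.F μ s j m
        + chainSum (Fm ρ.F μ s) s (m + 1) * ⁅ρ.E (t + 1) (t + 1), Fm ρ.F μ s j m⁆
      = ⁅ρ.E (t + 1) (t + 1), chainSum (Fm ρ.F μ s) s (m + 1)⁆ * Fm ρ.F μ s j m := by
    intro m hm
    rw [Finset.mem_Icc] at hm
    rw [ρ.lie_E_Fm_of_ne μ (by omega) (by omega) hj hm.1 (by omega) (by omega) (by omega),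
      mul_zero, add_zero]
  rw [lie_chainSum _ (by omega),
    ← Finset.sum_subset (Finset.Icc_subset_Icc_right (by omega : t + 1 ≤ s)) hhigh,
    Finset.sum_Icc_succ_top (by omega), Finset.sum_congr rfl hlow, hE_Q _ le_rfl,
    ρ.lie_E_Fm_of_lt_left μ hj hjt (by omega), Nat.add_sub_cancel, zero_mul, zero_add,
    mul_smul_comm]

theorem lie_E_chainSum {t j : ℕ} (hj : 1 ≤ j) (hjt : j ≤ t) (hts : t ≤ s) (hsn : s ≤ n) :
    ⁅ρ.E t t, chainSum (Fm ρ.F μ s) s j⁆ =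
      chainSum (Fm ρ.F μ s) s (t + 1) *
        ((ρ.H t - ((μ t + 1 : ℤ) : ℂ) • 1) * chainSum (Fm ρ.F μ s) (t - 1) j
          - (if j = t then (mus μ t s : ℂ) else 0) • 1) := by
  induction hd : t - j using Nat.strong_induction_on generalizing j with
  | _ d ih =>
  rcases hjt.lt_or_eq with hjt | rfl
  swap
  · rw [ρ.lie_E_chainSum_self μ hj hts hsn, chainSum_of_lt (by omega : j - 1 < j), if_pos rfl,
      mus_eq_neg_add μ hts, mul_one]
    congr 1
    push_cast
    module
  set Q := chainSum (Fm ρ.F μ s) s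
  set X := ρ.H t - ((μ t + 1 : ℤ) : ℂ) • 1
  have hterm : ∀ m ∈ Finset.Icc j (t - 1), ⁅ρ.E t t, Q (m + 1)⁆ * Fm ρ.F μ s j m
      = Q (t + 1) * X * (chainSum (Fm ρ.F μ s) (t - 1) (m + 1) * Fm ρ.F μ s j m)
        - if m = t - 1 then (mus μ t s : ℂ) • (Q (t + 1) * Fm ρ.F μ s j (t - 1)) else 0 := by
    intro m hm
    rw [Finset.mem_Icc] at hm
    rw [ih (t - (m + 1)) (by omega) (by omega) (by omega) rfl]
    split_ifs with h1 h2 h2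
    · subst h2
      simp only [mul_sub, sub_mul, mul_assoc, smul_mul_assoc, mul_smul_comm, one_mul]
    · omega
    · omega
    · simp only [mul_assoc, zero_smul, sub_zero]
  rw [ρ.lie_E_chainSum_of_lt μ hj hjt hts hsn, Finset.sum_congr rfl hterm,
    Finset.sum_sub_distrib, Finset.sum_ite_eq', if_pos (Finset.mem_Icc.2 ⟨by omega, le_rfl⟩),
    ← Finset.mul_sum, ← chainSum_of_le (by omega : j ≤ t - 1), if_neg hjt.ne]
  simp only [zero_smul, sub_zero, mul_assoc]
  abel

end SLRep

theorem SLRep.E_apply_eq_zero_of_simple {N : ℕ} (ρ : SLRep N M) {w : M}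
    (h : ∀ t, 1 ≤ t → t ≤ N → ρ.E t t w = 0) :
    ∀ p q, 1 ≤ p → p ≤ q → q ≤ N → ρ.E p q w = 0 := by
  intro p q hp hpq hqN
  induction q, hpq using Nat.le_induction with
  | base => exact h p hp hqN
  | succ q hpq ih =>
    have hbr := ρ.hEE p q (q + 1) (q + 1) hp hpq (by omega) (by omega) le_rfl hqN
    rw [if_pos rfl, if_neg (by omega), sub_zero] at hbr
    rw [← hbr, Ring.lie_def, LinearMap.sub_apply, Module.End.mul_apply, Module.End.mul_apply,
      h (q + 1) (by omega) hqN, ih (by omega), map_zero, map_zero, sub_zero]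

namespace SLPRep

variable {n : ℕ} (ρ : SLPRep n M) {μ : ℕ → ℤ} {v : M}

theorem E_P_apply (hv : IsHWvec n ρ.H ρ.E μ v) {t k : ℕ} (ht : 1 ≤ t) (htn : t ≤ n)
    (hk : 1 ≤ k) (hkn : k ≤ n + 1) :
    ρ.E t t (ρ.P k v) = if t + 1 = k then ρ.P t v else 0 := by
  rw [apply_apply_eq_add_lie, ρ.hEP t t k ht le_rfl htn hk hkn, hv.2 t t ht le_rfl htn, map_zero,
    zero_add]
  split_ifs <;> rfl

theorem E_chainSum_P_apply (hv : IsHWvec n ρ.H ρ.E μ v) {s t k : ℕ} (hk : 1 ≤ k)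
    (hks : k ≤ s + 1) (ht : 1 ≤ t) (hts : t ≤ s) (hsn : s ≤ n) :
    ρ.E t t (chainSum (Fm ρ.F μ s) s k (ρ.P k v)) =
      ((if k = t + 1 then 1 else 0) - if k = t then (mus μ t s : ℂ) else 0) •
        chainSum (Fm ρ.F μ s) s (t + 1) (ρ.P t v) := by
  rw [apply_apply_eq_add_lie, ρ.E_P_apply hv ht (by omega) hk (by omega)]
  rcases le_or_gt k t with hkt | htk
  · have hX :
        (ρ.H t - ((μ t + 1 : ℤ) : ℂ) • 1) (chainSum (Fm ρ.F μ s) (t - 1) k (ρ.P k v)) = 0 := by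
      have hw := mem_weightSpace.1 (ρ.chainSum_Fm_P_mem_weightSpace μ hk (s' := s) (s := t - 1)
        (by omega) (by omega) (mem_weightSpace.2 hv.1)) t ht (by omega)
      rw [Nat.sub_add_cancel ht, wsh, if_pos rfl, if_neg (by omega)] at hw
      rw [LinearMap.sub_apply, hw, LinearMap.smul_apply, Module.End.one_apply]
      simp
    rw [ρ.toSLRep.lie_E_chainSum μ hk hkt hts hsn, if_neg (show ¬t + 1 = k by omega), map_zero,
      zero_add, Module.End.mul_apply, LinearMap.sub_apply, Module.End.mul_apply, hX, zero_sub,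
      LinearMap.smul_apply, Module.End.one_apply, map_neg, map_smul,
      if_neg (show ¬k = t + 1 by omega), zero_sub, neg_smul]
    split_ifs with hkt'
    · subst hkt'; rfl
    · simp
  · rw [commute_iff_lie_eq.1 (ρ.commute_E_chainSum μ ht (by omega) hk hsn (Or.inl htk)),
      LinearMap.zero_apply, add_zero, if_neg (show ¬k = t by omega), sub_zero]
    split_ifs with h1 h2 h2
    · subst h1; rw [one_smul]
    · omega
    · omega
    · rw [map_zero, zero_smul]

theorem E_PhiOp_apply (hv : IsHWvec n ρ.H ρ.E μ v) {i t : ℕ} (hi1 : 1 ≤ i) (hi2 : i ≤ n + 1)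
    (ht : 1 ≤ t) (htn : t ≤ n) : ρ.E t t (PhiOp ρ.F ρ.P μ i v) = 0 := by
  obtain ⟨s, rfl⟩ : ∃ s, i = s + 1 := ⟨i - 1, by omega⟩
  rw [PhiOp_eq_sum, LinearMap.sum_apply, map_sum]
  simp only [Module.End.mul_apply, Pm, LinearMap.smul_apply, map_smul, Nat.add_sub_cancel]
  rcases le_or_gt t s with hts | hst
  · have hterm : ∀ k ∈ Finset.Icc 1 (s + 1),
        ((∏ x ∈ Finset.Icc 1 (k - 1), mus μ x s : ℤ) : ℂ) •
          ρ.E t t (chainSum (Fm ρ.F μ s) s k (ρ.P k v))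
        = (((∏ x ∈ Finset.Icc 1 (k - 1), mus μ x s : ℤ) : ℂ) *
            ((if k = t + 1 then 1 else 0) - if k = t then (mus μ t s : ℂ) else 0)) •
          chainSum (Fm ρ.F μ s) s (t + 1) (ρ.P t v) := fun k hk => by
      rw [Finset.mem_Icc] at hk
      rw [ρ.E_chainSum_P_apply hv hk.1 hk.2 ht hts (by omega), smul_smul]
    rw [Finset.sum_congr rfl hterm, ← Finset.sum_smul]
    simp only [mul_sub, mul_ite, mul_one, mul_zero, Finset.sum_sub_distrib, Finset.sum_ite_eq',
      Finset.mem_Icc]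
    rw [if_pos ⟨by omega, by omega⟩, if_pos ⟨ht, by omega⟩, Nat.add_sub_cancel]
    obtain ⟨t, rfl⟩ : ∃ t', t = t' + 1 := ⟨t - 1, by omega⟩
    rw [Nat.add_sub_cancel, Finset.prod_Icc_succ_top (by omega : 1 ≤ t + 1)]
    push_cast
    rw [sub_self, zero_smul]
  · refine Finset.sum_eq_zero fun k hk => ?_
    rw [Finset.mem_Icc] at hk
    rw [← Module.End.mul_apply,
      (ρ.commute_E_chainSum μ ht htn hk.1 (by omega) (Or.inr hst)).eq, Module.End.mul_apply,
      ρ.E_P_apply hv ht htn hk.1 (by omega), if_neg (by omega), map_zero, smul_zero]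

end SLPRep

end Paper

open Paper in
/-- Theorem 3.12: if `v` is an `sl(n+1)`-highest weight vector of weight `μ`
in an `sl(n+1) ⋉ ℂ^{n+1}`-module, then `φ_i(v)` is either zero or a highest weight vector
of weight `μ + ω_i - ω_{i-1}`. -/
theorem stmt_9 (n : ℕ) (M : Type) [AddCommGroup M] [Module ℂ M]
    (ρ : SLPRep n M) (μ : ℕ → ℤ) (v : M)
    (hv : IsHWvec n ρ.H ρ.E μ v) (i : ℕ) (hi1 : 1 ≤ i) (hi2 : i ≤ n + 1) :
    PhiOp ρ.F ρ.P μ i v = 0 ∨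
      (PhiOp ρ.F ρ.P μ i v ≠ 0 ∧
        IsHWvec n ρ.H ρ.E (wsh i μ) (PhiOp ρ.F ρ.P μ i v)) := by
  by_cases h : PhiOp ρ.F ρ.P μ i v = 0
  · exact Or.inl h
  · refine Or.inr ⟨h, mem_weightSpace.1 (ρ.PhiOp_mem_weightSpace (mem_weightSpace.2 hv.1) hi1 hi2),
      ?_⟩
    exact ρ.E_apply_eq_zero_of_simple fun t ht htn => ρ.E_PhiOp_apply hv hi1 hi2 ht htn
end

section
/- The elements Q_k^{(μ(s))} admit the explicit expansion Q_k^{(μ(s))} = Σ over sequences s ≥ j_1 > j_2 > ··· > j_h ≥ k of the monomials (∏_{i=1}^{h+1} ∏_{l=j_i+1}^{j_{i−1}} μ_{l,s}) F_{j_1,s} F_{j_2,j_1−1} ··· F_{j_h,j_{h−1}−1} F_{k,j_h−1}, with the conventions j_0 = s and F_{j,0} = 1. In particular, in each monomial of Q_k^{(μ(s))} the root-vector factors F_{p,q} have pairwise disjoint index intervals. -/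
open Module

namespace Paper

/-- The monomial `F^{(μ(s))}_{j_1,top} F^{(μ(s))}_{j_2,j_1-1} ⋯ F^{(μ(s))}_{k,j_h-1}`
attached to a strictly decreasing sequence `top ≥ j_1 > j_2 > ⋯ > j_h > k`. -/
noncomputable def monoAux {A : Type} [Ring A] [Algebra ℂ A]
    (F : ℕ → ℕ → A) (μ : ℕ → ℤ) (s k : ℕ) : ℕ → List ℕ → A
  | top, [] => Fm F μ s k top
  | top, j :: L => Fm F μ s j top * monoAux F μ s k (j - 1) L

variable {A : Type} [Ring A] [Algebra ℂ A]

lemma monoAux_append (F : ℕ → ℕ → A) (μ : ℕ → ℤ) (s k m : ℕ) :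
    ∀ (L : List ℕ) (top : ℕ),
      monoAux F μ s k top (L ++ [m]) = monoAux F μ s m top L * Fm F μ s k (m - 1)
  | [], top => by simp [monoAux]
  | j :: L, top => by
      simp only [List.cons_append, monoAux, List.append_eq]
      rw [monoAux_append F μ s k m L (j - 1), mul_assoc]

lemma powerset_sum_min {β : Type*} [AddCommMonoid β] (b : ℕ) :
    ∀ (d a : ℕ), b + 1 - a = d → ∀ (g : Finset ℕ → β),
      ∑ T ∈ (Finset.Icc a b).powerset, g T
        = g ∅ + ∑ m ∈ Finset.Icc a b, ∑ T ∈ (Finset.Icc (m + 1) b).powerset, g (insert m T)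
  | 0, a, h, g => by
      rw [Finset.Icc_eq_empty (by omega)]
      simp
  | d + 1, a, h, g => by
      have hab : a ≤ b := by omega
      have hnot : a ∉ Finset.Icc (a + 1) b := by simp [Finset.mem_Icc]
      have h1 : Finset.Icc a b = insert a (Finset.Icc (a + 1) b) := by
        ext x; simp only [Finset.mem_Icc, Finset.mem_insert]; omega
      rw [h1, Finset.sum_powerset_insert hnot,
        powerset_sum_min b d (a + 1) (by omega) g, Finset.sum_insert hnot]
      abel

lemma qop_expand (μ : ℕ → ℤ) (F : ℕ → ℕ → A) (s : ℕ) :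
    ∀ (d k : ℕ), s - k = d → 1 ≤ k → k ≤ s →
      Qop F μ s k = ∑ T ∈ (Finset.Icc (k + 1) s).powerset,
        monoAux F μ s k s ((T.sort (· ≤ ·)).reverse) := by
  intro d
  induction' d using Nat.strong_induction_on with d ih
  intro k hd hk hks
  -- unfold the recursion
  rw [Qop, if_neg (by omega)]
  rw [Finset.sum_attach (Finset.range (s + 1 - k))
    (fun l => Qop F μ s (s - l + 1) * Fm F μ s k (s - l))]
  -- reindex l ↦ j = s - l
  rw [Finset.sum_nbij' (i := fun l => s - l) (j := fun j => s - j)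
    (t := Finset.Icc k s)
    (g := fun j => Qop F μ s (j + 1) * Fm F μ s k j)
    (by intro a ha; simp only [Finset.mem_range] at ha; simp only [Finset.mem_Icc]; omega)
    (by intro a ha; simp only [Finset.mem_Icc] at ha; simp only [Finset.mem_range]; omega)
    (by intro a ha; simp only [Finset.mem_range] at ha; show s - (s - a) = a; omega)
    (by intro a ha; simp only [Finset.mem_Icc] at ha; show s - (s - a) = a; omega)
    (by intro a ha; rfl)]
  -- split off the term j = s
  have hsnot : s ∉ Finset.Icc k (s - 1) := by simp [Finset.mem_Icc]; omega
  have hsplit : Finset.Icc k s = insert s (Finset.Icc k (s - 1)) := by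
    ext x; simp only [Finset.mem_Icc, Finset.mem_insert]; omega
  rw [hsplit, Finset.sum_insert hsnot]
  have hq1 : Qop F μ s (s + 1) = 1 := by rw [Qop, if_pos le_rfl]
  rw [hq1, one_mul]
  -- rewrite the RHS by partitioning over the minimum
  rw [powerset_sum_min s (s + 1 - (k + 1)) (k + 1) (by omega)]
  congr 1
  · simp [monoAux]
  -- reindex m ↦ j = m - 1 on the RHS
  rw [Finset.sum_nbij' (i := fun j => j + 1) (j := fun m => m - 1)
    (t := Finset.Icc (k + 1) s)
    (g := fun m => ∑ T ∈ (Finset.Icc (m + 1) s).powerset,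
        monoAux F μ s k s (((insert m T).sort (· ≤ ·)).reverse))
    (by intro a ha; simp only [Finset.mem_Icc] at ha ⊢; omega)
    (by intro a ha; simp only [Finset.mem_Icc] at ha ⊢; omega)
    (by intro a _; show a + 1 - 1 = a; omega)
    (by intro a ha; simp only [Finset.mem_Icc] at ha; show a - 1 + 1 = a; omega)
    ?_]
  intro j hj
  simp only [Finset.mem_Icc] at hj
  have hj1 : j + 1 ≤ s := by omega
  rw [ih (s - (j + 1)) (by omega) (j + 1) rfl (by omega) hj1, Finset.sum_mul]
  refine Finset.sum_congr rfl ?_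
  intro T hT
  simp only [Finset.mem_powerset] at hT
  have hmem : ∀ b ∈ T, j + 1 ≤ b := by
    intro b hb; have := hT hb; simp only [Finset.mem_Icc] at this; omega
  have hnotmem : j + 1 ∉ T := by
    intro hmm; have := hT hmm; simp only [Finset.mem_Icc] at this; omega
  rw [Finset.sort_insert _ hmem hnotmem, List.reverse_cons, monoAux_append]
  congr 2

end Paper

open Paper in
/-- Proposition 3.9 (6): the explicit expansion of `Q_k^{(μ(s))}` as the sum,
over all subsets `T ⊆ {k+1, …, s}` (listed in decreasing order `j_1 > ⋯ > j_h`), of the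
monomials `F^{(μ(s))}_{j_1,s} F^{(μ(s))}_{j_2,j_1-1} ⋯ F^{(μ(s))}_{j_h,j_{h-1}-1} F^{(μ(s))}_{k,j_h-1}`;
in particular the root-vector factors of each monomial have pairwise disjoint index intervals. -/
theorem stmt_11 (μ : ℕ → ℤ) (s k : ℕ) (hk : 1 ≤ k) (hks : k ≤ s)
    (A : Type) [Ring A] [Algebra ℂ A] (F : ℕ → ℕ → A) :
    Qop F μ s k =
      ∑ T ∈ (Finset.Icc (k + 1) s).powerset,
        monoAux F μ s k s ((T.sort (· ≤ ·)).reverse) :=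
  qop_expand μ F s (s - k) k rfl hk hks
end

section
/- For the R-operators defined by R_{i,0}^{(μ(s))} = 1 and R_{i,k}^{(μ(s))} = Σ_{l=0}^{k−1} F_{i+l,i+k−1}^{(μ(s))} R_{i,l}^{(μ(s))}, it holds that R_{i,s−i+1}^{(μ(s))} = Q_i^{(μ(s))} for all 1 ≤ i ≤ s. -/
open Module

section Aux
open Paper
variable {A : Type} [Ring A] [Algebra ℂ A]

lemma Rop_zero (F : ℕ → ℕ → A) (μ : ℕ → ℤ) (s i : ℕ) : Rop F μ s i 0 = 1 := by
  rw [Rop]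

lemma Rop_succ (F : ℕ → ℕ → A) (μ : ℕ → ℤ) (s i k : ℕ) :
    Rop F μ s i (k+1) = ∑ l ∈ Finset.range (k+1), Fm F μ s (i+l) (i+k) * Rop F μ s i l := by
  rw [Rop]
  exact Finset.sum_attach (Finset.range (k+1)) (fun l => Fm F μ s (i+l) (i+k) * Rop F μ s i l)

lemma Qop_eq (F : ℕ → ℕ → A) (μ : ℕ → ℤ) (s k : ℕ) (hk : k ≤ s) :
    Qop F μ s k = ∑ l ∈ Finset.range (s+1-k), Qop F μ s (s-l+1) * Fm F μ s k (s-l) := by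
  rw [Qop, if_neg (by omega)]
  exact Finset.sum_attach (Finset.range (s+1-k)) (fun l => Qop F μ s (s-l+1) * Fm F μ s k (s-l))


lemma key (F : ℕ → ℕ → A) (μ : ℕ → ℤ) (s : ℕ) :
    ∀ n i, Rop F μ s i (n + 1)
      = ∑ m ∈ Finset.Icc i (i + n), Rop F μ s (m+1) (i + n - m) * Fm F μ s i m := by
  intro n
  induction n using Nat.strong_induction_on with
  | _ n ih =>
    intro i
    match n with
    | 0 =>
      simp [Rop_succ, Rop_zero, Finset.sum_range_one]
    | Nat.succ n =>
      rw [Rop_succ, Finset.sum_range_succ']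
      have htop : i + (n+1) = (i + n) + 1 := by omega
      rw [htop, Finset.sum_Icc_succ_top (by omega)]
      have hL : ∀ l ∈ Finset.range (n+1),
          Fm F μ s (i+(l+1)) (i+n+1) * Rop F μ s i (l+1)
          = ∑ m ∈ Finset.Icc i (i+l),
              Fm F μ s (i+l+1) (i+n+1) * (Rop F μ s (m+1) (i+l-m) * Fm F μ s i m) := by
        intro l hl
        rw [ih l (by simpa using hl) i, Finset.mul_sum]
        congr 1
      have hR : ∀ m ∈ Finset.Icc i (i+n),
          Rop F μ s (m+1) (i+n+1-m) * Fm F μ s i m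
          = ∑ l ∈ Finset.range (i+n-m+1),
              (Fm F μ s (m+1+l) (i+n+1) * Rop F μ s (m+1) l) * Fm F μ s i m := by
        intro m hm
        simp only [Finset.mem_Icc] at hm
        have h1 : i+n+1-m = (i+n-m) + 1 := by omega
        have h2 : (m+1) + (i+n-m) = i+n+1 := by omega
        rw [h1, Rop_succ, h2, Finset.sum_mul]
      rw [Finset.sum_congr rfl hL, Finset.sum_congr rfl hR]
      rw [Finset.sum_sigma', Finset.sum_sigma']
      simp only [Nat.sub_self, Rop_zero, Nat.add_zero, mul_one, one_mul]
      congr 1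
      refine Finset.sum_nbij' (i := fun p => ⟨p.2, i + p.1 - p.2⟩)
        (j := fun p => ⟨p.1 + p.2 - i, p.1⟩) ?_ ?_ ?_ ?_ ?_
      · rintro ⟨l, m⟩ hp
        simp only [Finset.mem_sigma, Finset.mem_range, Finset.mem_Icc] at hp ⊢
        omega
      · rintro ⟨m, l⟩ hp
        simp only [Finset.mem_sigma, Finset.mem_range, Finset.mem_Icc] at hp ⊢
        omega
      · rintro ⟨l, m⟩ hp
        simp only [Finset.mem_sigma, Finset.mem_range, Finset.mem_Icc] at hp
        simp only [Sigma.mk.inj_iff, heq_eq_eq, and_true, true_and]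
        omega
      · rintro ⟨m, l⟩ hp
        simp only [Finset.mem_sigma, Finset.mem_range, Finset.mem_Icc] at hp
        simp only [Sigma.mk.inj_iff, heq_eq_eq, and_true, true_and]
        omega
      · rintro ⟨l, m⟩ hp
        simp only [Finset.mem_sigma, Finset.mem_range, Finset.mem_Icc] at hp
        have h3 : m + 1 + (i + l - m) = i + l + 1 := by omega
        rw [h3, mul_assoc]

lemma main (F : ℕ → ℕ → A) (μ : ℕ → ℤ) (s : ℕ) :
    ∀ n i, 1 ≤ i → i ≤ s → s - i = n → Rop F μ s i (s - i + 1) = Qop F μ s i := by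
  intro n
  induction n using Nat.strong_induction_on with
  | _ n ih =>
    intro i h1 h2 hn
    have hs : i + (s - i) = s := by omega
    rw [Qop_eq F μ s i h2, key F μ s (s - i) i, hs]
    refine Finset.sum_nbij' (i := fun m => s - m) (j := fun l => s - l) ?_ ?_ ?_ ?_ ?_
    · intro m hm; simp only [Finset.mem_Icc] at hm; simp only [Finset.mem_range]; omega
    · intro l hl; simp only [Finset.mem_range] at hl; simp only [Finset.mem_Icc]; omega
    · intro m hm; simp only [Finset.mem_Icc] at hm; show s - (s - m) = m; omega
    · intro l hl; simp only [Finset.mem_range] at hl; show s - (s - l) = l; omega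
    · intro m hm
      simp only [Finset.mem_Icc] at hm
      have hmm : s - (s - m) = m := by omega
      rw [hmm]
      congr 1
      rcases eq_or_lt_of_le hm.2 with h | h
      · subst h
        rw [Nat.sub_self, Rop_zero, Qop, if_pos (by omega)]
      · have := ih (s - (m+1)) (by omega) (m+1) (by omega) (by omega) rfl
        have h4 : s - (m+1) + 1 = s - m := by omega
        rw [h4] at this
        exact this

end Aux

open Paper in
/-- Proposition 3.10 (6): `R^{(μ(s))}_{i,s-i+1} = Q^{(μ(s))}_i` for `1 ≤ i ≤ s`. -/
theorem stmt_12 (μ : ℕ → ℤ) (s i : ℕ) (hi : 1 ≤ i) (his : i ≤ s)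
    (A : Type) [Ring A] [Algebra ℂ A] (F : ℕ → ℕ → A) :
    Rop F μ s i (s - i + 1) = Qop F μ s i :=
  main F μ s (s - i) i hi his rfl
end

section
/- For every dominant integral weight λ = Σ_{i=1}^{n+1} λ_i ω_i of sl(n+2), the restriction V(λ)_Φ of the irreducible sl(n+2)-module V(λ) to sl(n+1) ⋉ C^{n+1} along the embedding Φ is a cyclic module, generated by the sl(n+2)-highest weight vector v_λ, whose sl(n+1)-weight is λ_0 = Σ_{k=2}^{n+1} λ_k ω_k, with the indices of the sl(n+1) fundamental weights shifted. -/
open Module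

open Paper in
lemma gGen_spec {M : Type} [AddCommGroup M] [Module ℂ M] (n : ℕ)
    (Hop : ℕ → Module.End ℂ M) (Eop Fop : ℕ → ℕ → Module.End ℂ M)
    (Pop : ℕ → Module.End ℂ M) (v : M) :
    v ∈ gGen n Hop Eop Fop Pop v ∧ gInvariant n Hop Eop Fop Pop (gGen n Hop Eop Fop Pop v) := by
  refine ⟨Submodule.mem_sInf.2 fun Ns hNs => hNs.2,
    ⟨⟨fun i h1 h2 w hw => Submodule.mem_sInf.2 fun Ns hNs =>
        hNs.1.1.1 i h1 h2 w (Submodule.mem_sInf.1 hw Ns hNs),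
      fun p q hp hpq hq w hw =>
        ⟨Submodule.mem_sInf.2 fun Ns hNs =>
          (hNs.1.1.2 p q hp hpq hq w (Submodule.mem_sInf.1 hw Ns hNs)).1,
         Submodule.mem_sInf.2 fun Ns hNs =>
          (hNs.1.1.2 p q hp hpq hq w (Submodule.mem_sInf.1 hw Ns hNs)).2⟩⟩,
     fun j h1 h2 w hw => Submodule.mem_sInf.2 fun Ns hNs =>
        hNs.1.2 j h1 h2 w (Submodule.mem_sInf.1 hw Ns hNs)⟩⟩

open Paper in
/-- Theorem 4.3: for a dominant integral weight `λ` of `sl(n+2)`, the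
restriction of the irreducible module `V(λ)` to `sl(n+1) ⋉ ℂ^{n+1}` along the embedding
`Φ` (`H_i ↦ H_{i+1}`, `E_{p,q} ↦ E_{p+1,q+1}`, `F_{p,q} ↦ F_{p+1,q+1}`, `P_j ↦ F_{1,j}`)
is cyclic, generated by the `sl(n+2)`-highest weight vector `v_λ`, whose
`sl(n+1)`-weight is `λ_0 = ∑_{k=2}^{n+1} λ_k ω_k`. -/
theorem stmt_18 (n : ℕ) (M : Type) [AddCommGroup M] [Module ℂ M] [FiniteDimensional ℂ M]
    (σ : SLRep (n + 1) M) (lam : ℕ → ℕ) (v : M) (hv0 : v ≠ 0)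
    (hv : IsHWvec (n + 1) σ.H σ.E (fun i => (lam i : ℤ)) v)
    (hgen : slGen (n + 1) σ.H σ.E σ.F v = ⊤)
    (hirr : ∀ Ns : Submodule ℂ M, slInvariant (n + 1) σ.H σ.E σ.F Ns → Ns = ⊥ ∨ Ns = ⊤) :
    gGen n (fun i => σ.H (i + 1)) (fun p q => σ.E (p + 1) (q + 1))
        (fun p q => σ.F (p + 1) (q + 1)) (fun j => σ.F 1 j) v = ⊤ ∧
    ∀ i, 1 ≤ i → i ≤ n → σ.H (i + 1) v = ((lam (i + 1) : ℤ) : ℂ) • v := by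
  refine ⟨?_, fun i h1 h2 => hv.1 (i + 1) (by omega) (by omega)⟩
  obtain ⟨hGv, ⟨⟨hGH, hGEF⟩, hGP⟩⟩ := gGen_spec n (fun i => σ.H (i + 1))
    (fun p q => σ.E (p + 1) (q + 1)) (fun p q => σ.F (p + 1) (q + 1)) (fun j => σ.F 1 j) v
  -- W : smallest submodule containing v closed under all F_{p,q}, 1 ≤ p ≤ q ≤ n+1
  set W : Submodule ℂ M :=
    sInf {Ns | v ∈ Ns ∧ ∀ p q, 1 ≤ p → p ≤ q → q ≤ n + 1 → ∀ w ∈ Ns, σ.F p q w ∈ Ns} with hWdef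
  have hWv : v ∈ W := Submodule.mem_sInf.2 fun Ns hNs => hNs.1
  have hWF : ∀ p q, 1 ≤ p → p ≤ q → q ≤ n + 1 → ∀ w ∈ W, σ.F p q w ∈ W :=
    fun p q hp hpq hq w hw => Submodule.mem_sInf.2 fun Ns hNs =>
      hNs.2 p q hp hpq hq w (Submodule.mem_sInf.1 hw Ns hNs)
  -- W ≤ gGen
  have hWle : W ≤ gGen n (fun i => σ.H (i + 1)) (fun p q => σ.E (p + 1) (q + 1))
      (fun p q => σ.F (p + 1) (q + 1)) (fun j => σ.F 1 j) v := by
    apply sInf_le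
    refine ⟨hGv, ?_⟩
    intro p q hp hpq hq w hw
    rcases Nat.eq_or_lt_of_le hp with h1 | h2
    · have := hGP q (by omega) (by omega) w hw
      simpa [← h1] using this
    · have := (hGEF (p - 1) (q - 1) (by omega) (by omega) (by omega) w hw).2
      have e1 : p - 1 + 1 = p := by omega
      have e2 : q - 1 + 1 = q := by omega
      simpa [e1, e2] using this
  -- H-closure of W
  have hWH : ∀ i, 1 ≤ i → i ≤ n + 1 → ∀ w ∈ W, σ.H i w ∈ W := by
    have key : W ≤ W ⊓ ⨅ (i : ℕ) (_ : 1 ≤ i) (_ : i ≤ n + 1), Submodule.comap (σ.H i) W := by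
      apply sInf_le
      constructor
      · simp only [Submodule.mem_inf, Submodule.mem_iInf, Submodule.mem_comap]
        exact ⟨hWv, fun i h1 h2 => by rw [hv.1 i h1 h2]; exact W.smul_mem _ hWv⟩
      · intro p q hp hpq hq w hw
        simp only [Submodule.mem_inf, Submodule.mem_iInf, Submodule.mem_comap] at hw ⊢
        refine ⟨hWF p q hp hpq hq w hw.1, fun i h1 h2 => ?_⟩
        have hb := σ.hHF i p q h1 h2 hp hpq hq
        rw [Ring.lie_def, sub_eq_iff_eq_add] at hb
        have happ := congrArg (fun f : Module.End ℂ M => f w) hb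
        simp only [Module.End.mul_apply, LinearMap.add_apply, LinearMap.smul_apply] at happ
        rw [happ]
        exact W.add_mem (W.smul_mem _ (hWF p q hp hpq hq w hw.1))
          (hWF p q hp hpq hq _ (hw.2 i h1 h2))
    intro i h1 h2 w hw
    have hm := key hw
    simp only [Submodule.mem_inf, Submodule.mem_iInf, Submodule.mem_comap] at hm
    exact hm.2 i h1 h2
  -- E-closure of W
  have hWE : ∀ p q, 1 ≤ p → p ≤ q → q ≤ n + 1 → ∀ w ∈ W, σ.E p q w ∈ W := by
    have key : W ≤ W ⊓ ⨅ (p : ℕ) (q : ℕ) (_ : 1 ≤ p) (_ : p ≤ q) (_ : q ≤ n + 1),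
        Submodule.comap (σ.E p q) W := by
      apply sInf_le
      constructor
      · simp only [Submodule.mem_inf, Submodule.mem_iInf, Submodule.mem_comap]
        exact ⟨hWv, fun p q h1 h2 h3 => by rw [hv.2 p q h1 h2 h3]; exact W.zero_mem⟩
      · intro r s hr hrs hs w hw
        simp only [Submodule.mem_inf, Submodule.mem_iInf, Submodule.mem_comap] at hw ⊢
        have hw1 : w ∈ W := hw.1
        refine ⟨hWF r s hr hrs hs w hw1, fun p q hp hpq hq => ?_⟩
        have hb := σ.hEF p q r s hp hpq hq hr hrs hs
        rw [Ring.lie_def, sub_eq_iff_eq_add] at hb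
        have happ := congrArg (fun f : Module.End ℂ M => f w) hb
        simp only [Module.End.mul_apply, LinearMap.add_apply] at happ
        rw [happ]
        refine W.add_mem (W.add_mem (W.add_mem (W.add_mem (W.add_mem ?_ ?_) ?_) ?_) ?_) ?_
        · split_ifs with h
          · rw [LinearMap.coe_sum, Finset.sum_apply]
            refine sum_mem fun t ht => ?_
            have := Finset.mem_Icc.1 ht
            exact hWH t (by omega) (by omega) w hw1
          · simp
        · split_ifs with h
          · rw [LinearMap.neg_apply]
            exact W.neg_mem (hWF (q + 1) s (by omega) (by omega) (by omega) w hw1)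
          · simp
        · split_ifs with h
          · rw [LinearMap.neg_apply]
            exact W.neg_mem (hw.2 (s + 1) q (by omega) (by omega) (by omega))
          · simp
        · split_ifs with h
          · exact hw.2 p (r - 1) (by omega) (by omega) (by omega)
          · simp
        · split_ifs with h
          · exact hWF r (p - 1) (by omega) (by omega) (by omega) w hw1
          · simp
        · exact hWF r s hr hrs hs _ (hw.2 p q hp hpq hq)
    intro p q hp hpq hq w hw
    have hm := key hw
    simp only [Submodule.mem_inf, Submodule.mem_iInf, Submodule.mem_comap] at hm
    exact hm.2 p q hp hpq hq
  -- W is sl-invariant, hence = ⊤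
  have hWtop : W = ⊤ := by
    rcases hirr W ⟨hWH, fun p q hp hpq hq w hw =>
        ⟨hWE p q hp hpq hq w hw, hWF p q hp hpq hq w hw⟩⟩ with h | h
    · exact absurd (Submodule.mem_bot ℂ |>.1 (h ▸ hWv)) hv0
    · exact h
  exact eq_top_iff.2 (hWtop ▸ hWle)
end
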